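/- arXiv:2105.08978 — 5 statements merged into one kernel-verified Lean document; each statement's English description precedes it below -/
import Mathlib

section
/- The function Π(x) = -c·x + (r-k)·b + ((r-k)/λ)·(1 - e^{-λ(x-b)}) defined for x ≥ b attains its maximum at x* = b + (1/λ)·ln((r-k)/c), with maximum value Π* = (r-k-c)·(b + 1/λ) - (c/λ)·ln((r-k)/c). -/
theorem stmt_0 (r k c lam b : ℝ) (hc : 0 < c) (hlam : 0 < lam) (hb : 0 ≤ b)
    (hr : r - k > 2 * c) :
    IsMaxOn (fun x => -c * x + (r - k) * b + ((r - k) / lam) * (1 - Real.exp (-lam * (x - b))))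
      {x : ℝ | b ≤ x} (b + (1 / lam) * Real.log ((r - k) / c)) ∧
    (fun x => -c * x + (r - k) * b + ((r - k) / lam) * (1 - Real.exp (-lam * (x - b))))
        (b + (1 / lam) * Real.log ((r - k) / c))
      = (r - k - c) * (b + 1 / lam) - (c / lam) * Real.log ((r - k) / c) := by
  have ha : 0 < r - k := by linarith
  set L := Real.log ((r - k) / c) with hL
  have hstar : Real.exp (-lam * (b + (1 / lam) * L - b)) = c / (r - k) := by
    have : -lam * (b + (1 / lam) * L - b) = -L := by
      field_simp
      ring
    rw [this, Real.exp_neg, Real.exp_log (by positivity)]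
    field_simp
  constructor
  · intro x hx
    simp only [Set.mem_setOf_eq] at hx
    simp only [Set.mem_setOf_eq]
    have hx0 : 0 ≤ x - b := by linarith
    -- exp (L - lam*(x-b)) ≥ L - lam*(x-b) + 1
    have h1 : L - lam * (x - b) + 1 ≤ Real.exp (L - lam * (x - b)) :=
      Real.add_one_le_exp _
    have h2 : Real.exp (L - lam * (x - b)) =
        ((r - k) / c) * Real.exp (-lam * (x - b)) := by
      rw [show L - lam * (x - b) = L + (-lam * (x - b)) by ring, Real.exp_add,
        Real.exp_log (by positivity)]
    rw [h2] at h1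
    rw [hstar, ← sub_nonneg]
    have hD : -c * (b + 1 / lam * L) + (r - k) * b + (r - k) / lam * (1 - c / (r - k)) -
        (-c * x + (r - k) * b + (r - k) / lam * (1 - Real.exp (-lam * (x - b))))
        = (c / lam) * ((r - k) / c * Real.exp (-lam * (x - b)) - (L - lam * (x - b) + 1)) := by
      field_simp
      ring
    rw [hD]
    have := sub_nonneg.mpr h1
    positivity
  · simp only []
    rw [hstar]
    field_simp
    ring
end

section
/- The function π̃_m(w) = (r-w)·(b + (1/λ)·(1 - c/(w-k))), defined for w > k, is strictly concave on (k, ∞) and is maximized at w̃ = k + sqrt((r-k)·c/(bλ+1)). -/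
theorem stmt_3 (r k c lam b : ℝ) (hc : 0 < c) (hlam : 0 < lam) (hb : 0 ≤ b)
    (hr : r - k > (b * lam + 1) * c) :
    StrictConcaveOn ℝ (Set.Ioi k)
      (fun w => (r - w) * (b + (1 / lam) * (1 - c / (w - k)))) ∧
    IsMaxOn (fun w => (r - w) * (b + (1 / lam) * (1 - c / (w - k)))) (Set.Ioi k)
      (k + Real.sqrt ((r - k) * c / (b * lam + 1))) := by
  have hA : 0 < b * lam + 1 := by positivity
  have hM : 0 < r - k := lt_trans (by positivity) hr
  have key : ∀ w : ℝ, k < w →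
      (r - w) * (b + (1 / lam) * (1 - c / (w - k))) =
      ((r - k) * (b + 1 / lam) + c / lam) - (b + 1 / lam) * (w - k)
        - (c * (r - k) / lam) / (w - k) := by
    intro w hw
    have hwk : w - k ≠ 0 := by
      have := sub_pos.mpr hw; linarith
    field_simp
    ring
  constructor
  · refine ⟨convex_Ioi k, ?_⟩
    intro x hx y hy hxy p q hp hq hpq
    simp only [Set.mem_Ioi] at hx hy
    have hx' : 0 < x - k := sub_pos.mpr hx
    have hy' : 0 < y - k := sub_pos.mpr hy
    have hq' : q = 1 - p := by linarith
    subst hq'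
    have hz : k < p * x + (1 - p) * y := by nlinarith
    have hz' : 0 < p * x + (1 - p) * y - k := sub_pos.mpr hz
    have hxyne : x - y ≠ 0 := sub_ne_zero.mpr hxy
    simp only [smul_eq_mul]
    rw [key x hx, key y hy, key _ hz, ← sub_pos]
    have expand :
        ((((r - k) * (b + 1 / lam) + c / lam) - (b + 1 / lam) * (p * x + (1 - p) * y - k)
          - (c * (r - k) / lam) / (p * x + (1 - p) * y - k))
        - (p * (((r - k) * (b + 1 / lam) + c / lam) - (b + 1 / lam) * (x - k)
            - (c * (r - k) / lam) / (x - k))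
          + (1 - p) * (((r - k) * (b + 1 / lam) + c / lam) - (b + 1 / lam) * (y - k)
            - (c * (r - k) / lam) / (y - k))))
        = (c * (r - k) / lam) * (p * (1 - p) * (x - y) ^ 2)
            / ((x - k) * (y - k) * (p * x + (1 - p) * y - k)) := by
      field_simp
      ring
    rw [expand]
    positivity
  · intro w hw
    simp only [Set.mem_Ioi] at hw
    set s := Real.sqrt ((r - k) * c / (b * lam + 1)) with hsdef
    have hsarg : 0 < (r - k) * c / (b * lam + 1) := by positivity
    have hspos : 0 < s := Real.sqrt_pos.mpr hsarg
    have hs2 : s ^ 2 = (r - k) * c / (b * lam + 1) := Real.sq_sqrt hsarg.le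
    have hw' : 0 < w - k := sub_pos.mpr hw
    have hks : k < k + s := by linarith
    simp only [Set.mem_setOf_eq]
    rw [key w hw, key _ hks]
    have hsk : k + s - k = s := by ring
    rw [hsk]
    have hKA : c * (r - k) / lam = (b + 1 / lam) * s ^ 2 := by
      rw [hs2]; field_simp
    rw [hKA, ← sub_nonneg]
    have expand :
        ((((r - k) * (b + 1 / lam) + c / lam) - (b + 1 / lam) * s
          - (b + 1 / lam) * s ^ 2 / s)
        - (((r - k) * (b + 1 / lam) + c / lam) - (b + 1 / lam) * (w - k)
          - (b + 1 / lam) * s ^ 2 / (w - k)))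
        = (b + 1 / lam) * (w - k - s) ^ 2 / ((w - k)) := by
      field_simp
      ring
    rw [expand]
    positivity
end

section
/- The supplier's profit function under the augmented contract, π̂_s(x) = -c·x + (w-k)·b + ((w-k)/λ)·(1 - e^{-λ(x-b)}) - ρ·e^{-λ(x-b)}, defined for x ≥ b, is maximized at x̂ = b + (1/λ)·ln((w - k + ρλ)/c), provided w - k + ρλ > c. -/
theorem stmt_7 (w k c lam rho b : ℝ) (hc : 0 < c) (hlam : 0 < lam) (hrho : 0 ≤ rho)
    (hb : 0 ≤ b) (hw : k < w) (h : w - k + rho * lam > c) :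
    IsMaxOn
      (fun x => -c * x + (w - k) * b + ((w - k) / lam) * (1 - Real.exp (-lam * (x - b)))
        - rho * Real.exp (-lam * (x - b)))
      {x : ℝ | b ≤ x}
      (b + (1 / lam) * Real.log ((w - k + rho * lam) / c)) := by
  rw [isMaxOn_iff]
  intro x hx
  set M : ℝ := w - k + rho * lam with hM
  have hMpos : 0 < M := lt_trans hc h
  have hlne : lam ≠ 0 := ne_of_gt hlam
  set xh : ℝ := b + (1 / lam) * Real.log (M / c) with hxh
  have hEh : Real.exp (-lam * (xh - b)) = c / M := by
    have : -lam * (xh - b) = Real.log (c / M) := by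
      rw [hxh]
      have : Real.log (c / M) = - Real.log (M / c) := by
        rw [Real.log_div (ne_of_gt hc) (ne_of_gt hMpos),
          Real.log_div (ne_of_gt hMpos) (ne_of_gt hc)]
        ring
      rw [this]; field_simp; ring
    rw [this, Real.exp_log (div_pos hc hMpos)]
  set s : ℝ := lam * (xh - x) with hs
  have hE : Real.exp (-lam * (x - b)) = (c / M) * Real.exp s := by
    rw [← hEh, ← Real.exp_add]
    congr 1
    rw [hs]; ring
  have hexp : s + 1 ≤ Real.exp s := Real.add_one_le_exp s
  simp only [Set.mem_setOf_eq] at hx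
  show -c * x + (w - k) * b + ((w - k) / lam) * (1 - Real.exp (-lam * (x - b)))
        - rho * Real.exp (-lam * (x - b)) ≤
      -c * xh + (w - k) * b + ((w - k) / lam) * (1 - Real.exp (-lam * (xh - b)))
        - rho * Real.exp (-lam * (xh - b))
  rw [hE, hEh]
  have hx' : xh - x = s / lam := by rw [hs]; field_simp
  have key : c * (xh - x) ≤ (c / lam) * (Real.exp s - 1) := by
    rw [hx']
    have h1 : c * (s / lam) = (c / lam) * s := by ring
    rw [h1]
    apply mul_le_mul_of_nonneg_left (by linarith) (le_of_lt (div_pos hc hlam))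
  have hcomb : ((w - k) / lam + rho) * (c / M) = c / lam := by
    field_simp
    ring
  nlinarith [key, hcomb, mul_nonneg (le_of_lt (Real.exp_pos s)) (le_of_lt hc)]
end

section
/- With ŵ = k + c + (c/(bλ+1))·ln((r-k)/c) and ρ̂ = (1/λ)·(r - k - c - (c/(bλ+1))·ln((r-k)/c)), we have ŵ + ρ̂·λ = r, the supplier's resulting profit (ŵ-c-k)·b + (ŵ-k-c)/λ - (c/λ)·ln((r-k)/c) equals 0, and the OEM's profit equals Π* = (r-k-c)·(b+1/λ) - (c/λ)·ln((r-k)/c). Moreover ρ̂ > 0. -/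
theorem stmt_9 (r k c lam b : ℝ) (hc : 0 < c) (hlam : 0 < lam) (hb : 0 ≤ b)
    (hr : r - k > 2 * c) :
    let what := k + c + (c / (b * lam + 1)) * Real.log ((r - k) / c)
    let rhohat := (1 / lam) * (r - k - c - (c / (b * lam + 1)) * Real.log ((r - k) / c))
    what + rhohat * lam = r ∧
    (what - c - k) * b + (what - k - c) / lam - (c / lam) * Real.log ((r - k) / c) = 0 ∧
    (r - what) * (b + (1 / lam) * (1 - c / (r - k))) + rhohat * (c / (r - k))
      = (r - k - c) * (b + 1 / lam) - (c / lam) * Real.log ((r - k) / c) ∧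
    0 < rhohat := by
  intro what rhohat
  have hrk : 0 < r - k := by nlinarith
  have hrk0 : r - k ≠ 0 := ne_of_gt hrk
  have hD : (0:ℝ) < b * lam + 1 := by nlinarith
  have hD1 : (1:ℝ) ≤ b * lam + 1 := by nlinarith
  have hDne : b * lam + 1 ≠ 0 := ne_of_gt hD
  have hlne : lam ≠ 0 := ne_of_gt hlam
  set L := Real.log ((r - k) / c) with hL
  have hx1 : (1:ℝ) < (r - k) / c := by
    rw [lt_div_iff₀ hc]; nlinarith
  have hLpos : 0 < L := Real.log_pos hx1
  have hLlt : L < (r - k) / c - 1 :=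
    Real.log_lt_sub_one_of_pos (by positivity) (ne_of_gt hx1)
  have hρ : 0 < rhohat := by
    have h1 : (c / (b * lam + 1)) * L ≤ c * L := by
      apply mul_le_mul_of_nonneg_right _ (le_of_lt hLpos)
      rw [div_le_iff₀ hD]; nlinarith
    have h2 : c * L < r - k - c := by
      have := mul_lt_mul_of_pos_left hLlt hc
      rw [mul_sub, mul_div_cancel₀ _ (ne_of_gt hc)] at this
      linarith
    have : 0 < r - k - c - (c / (b * lam + 1)) * L := by linarith
    exact mul_pos (by positivity) this
  refine ⟨?_, ?_, ?_, hρ⟩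
  · show k + c + (c / (b * lam + 1)) * L +
      (1 / lam) * (r - k - c - (c / (b * lam + 1)) * L) * lam = r
    field_simp
    ring
  · show (k + c + (c / (b * lam + 1)) * L - c - k) * b +
      (k + c + (c / (b * lam + 1)) * L - k - c) / lam - (c / lam) * L = 0
    field_simp
    ring
  · show (r - (k + c + (c / (b * lam + 1)) * L)) * (b + (1 / lam) * (1 - c / (r - k))) +
      (1 / lam) * (r - k - c - (c / (b * lam + 1)) * L) * (c / (r - k))
      = (r - k - c) * (b + 1 / lam) - (c / lam) * L
    field_simp
    ring
end

section
/- Let 0 < δ < 1 and define w^δ = k + (δc(1 + bλ + ln((r-k)/c)) + (1-δ)(r-k))/(1 + δbλ). Then (δ/(1-δ))·W(((1-δ)/δ)·e^{(w^δ-k)/(δc) - 1 + λb(w^δ-k-c)/c}) = (r-k)/c, i.e., the supplier's optimal capacity under the contingent-renewal contract with wholesale price w^δ equals the centralized optimum x* = b + (1/λ)·ln((r-k)/c). -/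
theorem stmt_14 (W : ℝ → ℝ)
    (hW : ∀ x : ℝ, 0 ≤ x → 0 ≤ W x ∧ W x * Real.exp (W x) = x)
    (hWinv : ∀ t : ℝ, 0 ≤ t → W (t * Real.exp t) = t)
    (r k c lam b δ : ℝ) (hc : 0 < c) (hlam : 0 < lam) (hb : 0 ≤ b)
    (hr : r - k > c) (hδ0 : 0 < δ) (hδ1 : δ < 1) :
    let wδ := k + (δ * c * (1 + b * lam + Real.log ((r - k) / c)) + (1 - δ) * (r - k))
        / (1 + δ * b * lam)
    (δ / (1 - δ)) *
        W (((1 - δ) / δ) * Real.exp ((wδ - k) / (δ * c) - 1 + lam * b * (wδ - k - c) / c))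
      = (r - k) / c := by
  intro wδ
  have hrc : (0:ℝ) < (r - k) / c := div_pos (lt_trans hc hr) hc
  have hδ0' : δ ≠ 0 := ne_of_gt hδ0
  have h1δ : (0:ℝ) < 1 - δ := by linarith
  have h1δ' : (1:ℝ) - δ ≠ 0 := ne_of_gt h1δ
  set t : ℝ := ((1 - δ) / δ) * ((r - k) / c) with ht
  have htpos : 0 < t := mul_pos (div_pos h1δ hδ0) hrc
  have hD : (1 : ℝ) + δ * b * lam ≠ 0 := by positivity
  have hE : (wδ - k) / (δ * c) - 1 + lam * b * (wδ - k - c) / c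
      = Real.log ((r - k) / c) + t := by
    show (k + (δ * c * (1 + b * lam + Real.log ((r - k) / c)) + (1 - δ) * (r - k))
        / (1 + δ * b * lam) - k) / (δ * c) - 1
        + lam * b * (k + (δ * c * (1 + b * lam + Real.log ((r - k) / c)) + (1 - δ) * (r - k))
        / (1 + δ * b * lam) - k - c) / c = _
    rw [ht]
    field_simp
    ring
  rw [hE, Real.exp_add, Real.exp_log hrc]
  have harg : ((1 - δ) / δ) * ((r - k) / c * Real.exp t) = t * Real.exp t := by
    rw [ht]; ring
  rw [harg, hWinv t htpos.le, ht]
  field_simp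
end
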